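/- Let X_p, p prime, be independent random variables uniform on the unit circle, and let G(X) = Re Σ_{p ∈ P} (w(p)/√p) X_p for a finite set of primes P and real weights 0 ≤ w(p) ≤ 1. Then for every natural number M, E[G(X)^{2M}] ≤ (2M)!/(2^{2M}·M!) · (2·Σ_{p∈P} w(p)²/p)^M. -/

import Mathlib

open MeasureTheory ProbabilityTheory Real Finset

lemma aux_sum_even (t : ℕ → ℝ) (h : ∀ k, Odd k → t k = 0) (M : ℕ) :
    ∑ k ∈ Finset.range (2*M+1), t k = ∑ j ∈ Finset.range (M+1), t (2*j) := by
  induction M with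
  | zero => simp
  | succ M ih =>
      have h1 : 2*(M+1)+1 = (2*M+1) + 1 + 1 := by ring
      rw [h1, Finset.sum_range_succ, Finset.sum_range_succ, ih, Finset.sum_range_succ,
        Finset.sum_range_succ, h (2*M+1) ⟨M, by ring⟩]
      have : 2*M+1+1 = 2*(M+1) := by ring
      rw [this, Finset.sum_range_succ (fun x => t (2*x)) M]; ring

lemma aux_fact_le (m : ℕ) : (2:ℕ)^m * m.factorial ≤ (2*m).factorial := by
  induction m with
  | zero => simp
  | succ m ih =>
      have h : 2*(m+1) = (2*m) + 1 + 1 := by ring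
      rw [h, Nat.factorial_succ, Nat.factorial_succ, Nat.factorial_succ, pow_succ]
      calc 2^m * 2 * ((m+1) * m.factorial) = (2*m+2) * (2^m * m.factorial) := by ring
      _ ≤ (2*m+2) * (2*m).factorial := Nat.mul_le_mul_left _ ih
      _ ≤ (2*m+1+1) * ((2*m+1) * (2*m).factorial) :=
          Nat.mul_le_mul (by omega) (Nat.le_mul_of_pos_left _ (by positivity))

lemma aux_fact_id (M j : ℕ) (hj : j ≤ M) :
    (((2*M).choose (2*j) : ℝ)) * (((2*j).factorial : ℝ) / (2^j * (j.factorial : ℝ))) *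
      (((2*(M-j)).factorial : ℝ) / (2^(M-j) * ((M-j).factorial : ℝ))) =
    ((2*M).factorial : ℝ) / (2^M * (M.factorial : ℝ)) * (M.choose j : ℝ) := by
  have h2j : 2*j ≤ 2*M := by omega
  have h1 := Nat.choose_mul_factorial_mul_factorial h2j
  have hsub : 2*M - 2*j = 2*(M-j) := by omega
  rw [hsub] at h1
  have h2 := Nat.choose_mul_factorial_mul_factorial hj
  have hpow : (2:ℝ)^M = 2^j * 2^(M-j) := by
    rw [← pow_add]; congr 1; omega
  have e1 : ((2*M).factorial : ℝ) = ((2*M).choose (2*j) : ℝ) * ((2*j).factorial : ℝ) * ((2*(M-j)).factorial : ℝ) := by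
    exact_mod_cast h1.symm
  have e2 : (M.factorial : ℝ) = (M.choose j : ℝ) * (j.factorial : ℝ) * ((M-j).factorial : ℝ) := by
    exact_mod_cast h2.symm
  have hj0 : (j.factorial : ℝ) ≠ 0 := by positivity
  have hmj0 : ((M-j).factorial : ℝ) ≠ 0 := by positivity
  have hM0 : (M.factorial : ℝ) ≠ 0 := by positivity
  field_simp
  rw [e1, hpow, e2]
  ring

lemma aux_iIndepFun_ae_eq {Ω ι : Type*} [MeasurableSpace Ω] {μ : Measure Ω}
    {β : ι → Type*} [m : ∀ i, MeasurableSpace (β i)] {f g : ∀ i, Ω → β i}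
    (hf : iIndepFun f μ) (hfg : ∀ i, f i =ᵐ[μ] g i) : iIndepFun g μ := by
  rw [iIndepFun_iff_measure_inter_preimage_eq_mul] at hf ⊢
  intro S sets hsets
  have hpre : ∀ i ∈ S, (f i ⁻¹' sets i : Set Ω) =ᵐ[μ] (g i ⁻¹' sets i) := by
    intro i _
    filter_upwards [hfg i] with ω hω
    exact congrArg (· ∈ sets i) hω
  have hInter : ((⋂ i ∈ S, f i ⁻¹' sets i : Set Ω)) =ᵐ[μ] (⋂ i ∈ S, g i ⁻¹' sets i) := by
    rw [Filter.eventuallyEq_set]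
    have := (ae_ball_iff S.countable_toSet).2 fun i hi =>
      Filter.eventuallyEq_set.1 (hpre i hi)
    filter_upwards [this] with ω hω
    simp only [Set.mem_iInter]
    exact ⟨fun h i hi => (hω i hi).1 (h i hi), fun h i hi => (hω i hi).2 (h i hi)⟩
  rw [← measure_congr hInter, hf S hsets]
  exact Finset.prod_congr rfl fun i hi => measure_congr (hpre i hi)

lemma aux_int {Ω : Type*} [MeasurableSpace Ω] {μ : Measure Ω} [IsProbabilityMeasure μ]
    {f : Ω → ℝ} (hm : AEStronglyMeasurable f μ) {C : ℝ} (h : ∀ᵐ ω ∂μ, |f ω| ≤ C) :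
    Integrable f μ :=
  (integrable_const C).mono' hm (h.mono fun ω hω => by simpa [Real.norm_eq_abs] using hω)



lemma aux_even_moment {Ω : Type*} [MeasurableSpace Ω] {μ : Measure Ω} [IsProbabilityMeasure μ]
    {f : Ω → ℝ} (hm : Measurable f) {B : ℝ} (hB : 0 ≤ B)
    (h : ∀ᵐ ω ∂μ, |f ω| ≤ Real.sqrt B) (m : ℕ) :
    ∫ ω, f ω ^ (2*m) ∂μ ≤ B ^ m := by
  have hptwise : ∀ᵐ ω ∂μ, f ω ^ (2*m) ≤ B ^ m := by
    filter_upwards [h] with ω hω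
    have h2 : f ω ^ 2 ≤ B := by
      have := pow_le_pow_left₀ (abs_nonneg _) hω 2
      rwa [sq_abs, Real.sq_sqrt hB] at this
    calc f ω ^ (2*m) = (f ω ^ 2) ^ m := by rw [← pow_mul]
    _ ≤ B ^ m := pow_le_pow_left₀ (sq_nonneg _) h2 m
  have hint : Integrable (fun ω => f ω ^ (2*m)) μ := by
    refine aux_int ((hm.pow_const _).aestronglyMeasurable) (C := Real.sqrt B ^ (2*m)) ?_
    filter_upwards [h] with ω hω
    rw [abs_pow]
    exact pow_le_pow_left₀ (abs_nonneg _) hω _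
  calc ∫ ω, f ω ^ (2*m) ∂μ ≤ ∫ _, B ^ m ∂μ := integral_mono_ae hint (integrable_const _) hptwise
  _ = B ^ m := by simp

lemma aux_coeff_nonneg (m : ℕ) : (0:ℝ) ≤ ((2*m).factorial : ℝ) / (2^m * (m.factorial : ℝ)) := by
  positivity

lemma aux_coeff_ge_one (m : ℕ) : (1:ℝ) ≤ ((2*m).factorial : ℝ) / (2^m * (m.factorial : ℝ)) := by
  rw [le_div_iff₀ (by positivity), one_mul]
  exact_mod_cast aux_fact_le m

lemma aux_main {Ω ι : Type*} [MeasurableSpace Ω] (μ : Measure Ω) [IsProbabilityMeasure μ]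
    (Y : ι → Ω → ℝ) (hindep : iIndepFun Y μ)
    (hmeas : ∀ i, Measurable (Y i)) (b : ι → ℝ) (hb : ∀ i, 0 ≤ b i)
    (hbound : ∀ i, ∀ᵐ ω ∂μ, |Y i ω| ≤ Real.sqrt (b i))
    (hodd : ∀ i k, Odd k → ∫ ω, Y i ω ^ k ∂μ = 0)
    (s : Finset ι) :
    ∀ M : ℕ, ∫ ω, (∑ i ∈ s, Y i ω) ^ (2*M) ∂μ ≤
      ((2*M).factorial : ℝ) / (2^M * (M.factorial : ℝ)) * (∑ i ∈ s, b i) ^ M := by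
  classical
  induction s using Finset.induction_on with
  | empty =>
      intro M
      rcases Nat.eq_zero_or_pos M with rfl | hM
      · simp
      · simp [zero_pow (by omega : 2*M ≠ 0), zero_pow (by omega : M ≠ 0)]
  | @insert i s hi ih =>
      intro M
      set S : Ω → ℝ := fun ω => ∑ j ∈ s, Y j ω with hS
      set B : ℝ := ∑ j ∈ s, b j with hBdef
      have hB0 : 0 ≤ B := Finset.sum_nonneg fun j _ => hb j
      have hSmeas : Measurable S := Finset.measurable_sum s fun j _ => hmeas j
      set Cs : ℝ := ∑ j ∈ s, Real.sqrt (b j) with hCs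
      have hCs0 : 0 ≤ Cs := Finset.sum_nonneg fun j _ => Real.sqrt_nonneg _
      have hSbound : ∀ᵐ ω ∂μ, |S ω| ≤ Cs := by
        have hall : ∀ᵐ ω ∂μ, ∀ j ∈ s, |Y j ω| ≤ Real.sqrt (b j) :=
          (ae_ball_iff s.countable_toSet).2 fun j _ => hbound j
        filter_upwards [hall] with ω hω
        calc |S ω| ≤ ∑ j ∈ s, |Y j ω| := Finset.abs_sum_le_sum_abs _ _
        _ ≤ Cs := Finset.sum_le_sum hω
      -- integrability of powers
      have hYint : ∀ k : ℕ, Integrable (fun ω => Y i ω ^ k) μ := fun k =>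
        aux_int (((hmeas i).pow_const k).aestronglyMeasurable)
          (C := Real.sqrt (b i) ^ k)
          (by filter_upwards [hbound i] with ω hω
              rw [abs_pow]; exact pow_le_pow_left₀ (abs_nonneg _) hω _)
      have hSint : ∀ k : ℕ, Integrable (fun ω => S ω ^ k) μ := fun k =>
        aux_int ((hSmeas.pow_const k).aestronglyMeasurable) (C := Cs ^ k)
          (by filter_upwards [hSbound] with ω hω
              rw [abs_pow]; exact pow_le_pow_left₀ (abs_nonneg _) hω _)
      have hsum_eq : (∑ j ∈ s, Y j) = S := by ext ω; simp [hS, Finset.sum_apply]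
      have hIndepS : IndepFun (Y i) S μ :=
        hsum_eq ▸ (hindep.indepFun_finsetSum_of_notMem hmeas hi).symm
      have hIndepPow : ∀ k m : ℕ,
          IndepFun (fun ω => Y i ω ^ k) (fun ω => S ω ^ m) μ := fun k m =>
        hIndepS.comp (measurable_id.pow_const k) (measurable_id.pow_const m)
      have hprod_int : ∀ k m : ℕ, Integrable (fun ω => Y i ω ^ k * S ω ^ m) μ := by
        intro k m
        refine aux_int ((((hmeas i).pow_const k).mul (hSmeas.pow_const m)).aestronglyMeasurable)
          (C := Real.sqrt (b i) ^ k * Cs ^ m) ?_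
        filter_upwards [hbound i, hSbound] with ω h1 h2
        rw [abs_mul, abs_pow, abs_pow]
        exact mul_le_mul (pow_le_pow_left₀ (abs_nonneg _) h1 _)
          (pow_le_pow_left₀ (abs_nonneg _) h2 _) (by positivity) (by positivity)
      -- expand
      have hexp : ∫ ω, (∑ j ∈ insert i s, Y j ω) ^ (2*M) ∂μ =
          ∑ k ∈ Finset.range (2*M+1),
            (∫ ω, Y i ω ^ k ∂μ) * (∫ ω, S ω ^ (2*M - k) ∂μ) * ((2*M).choose k : ℝ) := by
        have : ∀ ω, (∑ j ∈ insert i s, Y j ω) ^ (2*M) =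
            ∑ k ∈ Finset.range (2*M+1), Y i ω ^ k * S ω ^ (2*M-k) * ((2*M).choose k : ℝ) := by
          intro ω
          rw [Finset.sum_insert hi, add_pow]
        simp_rw [this]
        rw [integral_finset_sum _ (fun k _ => (hprod_int k (2*M-k)).mul_const _)]
        refine Finset.sum_congr rfl fun k _ => ?_
        rw [integral_mul_const]
        have := (hIndepPow k (2*M-k)).integral_mul_eq_mul_integral (hYint k).aestronglyMeasurable (hSint (2*M-k)).aestronglyMeasurable
        simp only [Pi.mul_apply] at this
        rw [show (fun a => Y i a ^ k * S a ^ (2*M-k)) =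
          ((fun ω => Y i ω ^ k) * fun ω => S ω ^ (2*M-k)) from rfl]; exact congrArg (· * ((2*M).choose k : ℝ)) this
      rw [hexp]
      have hodd' : ∀ k, Odd k →
          (∫ ω, Y i ω ^ k ∂μ) * (∫ ω, S ω ^ (2*M - k) ∂μ) * ((2*M).choose k : ℝ) = 0 := by
        intro k hk
        rw [hodd i k hk, zero_mul, zero_mul]
      rw [aux_sum_even _ hodd' M]
      have key : ∀ j ∈ Finset.range (M+1),
          (∫ ω, Y i ω ^ (2*j) ∂μ) * (∫ ω, S ω ^ (2*M - 2*j) ∂μ) * ((2*M).choose (2*j) : ℝ) ≤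
          ((2*M).factorial : ℝ) / (2^M * (M.factorial : ℝ)) *
            ((M.choose j : ℝ) * (b i ^ j * B ^ (M-j))) := by
        intro j hj
        have hjM : j ≤ M := by simpa using Nat.lt_succ_iff.mp (Finset.mem_range.mp hj)
        have hsub : 2*M - 2*j = 2*(M-j) := by omega
        rw [hsub]
        have h1 : ∫ ω, Y i ω ^ (2*j) ∂μ ≤
            ((2*j).factorial : ℝ) / (2^j * (j.factorial : ℝ)) * (b i ^ j) := by
          calc ∫ ω, Y i ω ^ (2*j) ∂μ ≤ b i ^ j :=
            aux_even_moment (hmeas i) (hb i) (hbound i) j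
          _ ≤ _ := le_mul_of_one_le_left (pow_nonneg (hb i) j) (aux_coeff_ge_one j)
        have h1' : 0 ≤ ∫ ω, Y i ω ^ (2*j) ∂μ :=
          integral_nonneg fun ω => Even.pow_nonneg (even_two_mul j) _
        have h2 := ih (M - j)
        have h2' : 0 ≤ ∫ ω, S ω ^ (2*(M-j)) ∂μ :=
          integral_nonneg fun ω => Even.pow_nonneg (even_two_mul (M-j)) _
        calc (∫ ω, Y i ω ^ (2*j) ∂μ) * (∫ ω, S ω ^ (2*(M-j)) ∂μ) * ((2*M).choose (2*j) : ℝ)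
            ≤ (((2*j).factorial : ℝ) / (2^j * (j.factorial : ℝ)) * (b i ^ j)) *
              ((((2*(M-j)).factorial : ℝ) / (2^(M-j) * ((M-j).factorial : ℝ))) * B ^ (M-j)) *
              ((2*M).choose (2*j) : ℝ) := by
              refine mul_le_mul_of_nonneg_right (mul_le_mul h1 h2 h2'
                (mul_nonneg (aux_coeff_nonneg j) (pow_nonneg (hb i) j))) (by positivity)
        _ = _ := by
              have hid := aux_fact_id M j hjM
              linear_combination (b i ^ j * B ^ (M - j)) * hid
      calc ∑ j ∈ Finset.range (M+1),
            (∫ ω, Y i ω ^ (2*j) ∂μ) * (∫ ω, S ω ^ (2*M - 2*j) ∂μ) * ((2*M).choose (2*j) : ℝ)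
          ≤ ∑ j ∈ Finset.range (M+1),
            ((2*M).factorial : ℝ) / (2^M * (M.factorial : ℝ)) *
              ((M.choose j : ℝ) * (b i ^ j * B ^ (M-j))) := Finset.sum_le_sum key
      _ = ((2*M).factorial : ℝ) / (2^M * (M.factorial : ℝ)) * (∑ j ∈ insert i s, b j) ^ M := by
          rw [← Finset.mul_sum, Finset.sum_insert hi, add_pow]
          congr 1
          refine Finset.sum_congr rfl fun j _ => ?_
          ring

noncomputable def circLaw : Measure ℂ :=
  Measure.map (fun θ : ℝ => Complex.exp (θ * Complex.I))
    (ENNReal.ofReal (2 * π)⁻¹ • volume.restrict (Set.Ico 0 (2 * π)))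

lemma aux_exp_meas : Measurable (fun θ : ℝ => Complex.exp (θ * Complex.I)) :=
  (Complex.measurable_ofReal.mul measurable_const).cexp

lemma circLaw_univ : circLaw Set.univ = 1 := by
  rw [circLaw, Measure.map_apply aux_exp_meas MeasurableSet.univ]
  simp only [Set.preimage_univ, Measure.smul_apply, Measure.restrict_apply MeasurableSet.univ,
    Set.univ_inter, Real.volume_Ico, smul_eq_mul, sub_zero]
  rw [ENNReal.ofReal_inv_of_pos (by positivity), ENNReal.inv_mul_cancel]
  · exact ne_of_gt (ENNReal.ofReal_pos.2 (by positivity))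
  · exact ENNReal.ofReal_ne_top

lemma circLaw_abs_ne : circLaw {z : ℂ | ‖z‖ ≠ 1} = 0 := by
  have hs : MeasurableSet {z : ℂ | ‖z‖ ≠ 1} :=
    (continuous_norm.measurable (measurableSet_singleton 1)).compl
  rw [circLaw, Measure.map_apply aux_exp_meas hs]
  have : (fun θ : ℝ => Complex.exp (θ * Complex.I)) ⁻¹' {z | ‖z‖ ≠ 1} = ∅ := by
    ext θ
    simp [Complex.norm_exp_ofReal_mul_I]
  simp [this]

lemma aux_cos_odd (k : ℕ) (hk : Odd k) :
    ∫ θ in (0:ℝ)..(2*π), Real.cos θ ^ k = 0 := by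
  have hint : ∀ a b : ℝ, IntervalIntegrable (fun θ => Real.cos θ ^ k) volume a b :=
    fun a b => (Real.continuous_cos.pow k).intervalIntegrable a b
  have h1 : (∫ θ in (0:ℝ)..π, Real.cos θ ^ k) + ∫ θ in π..(2*π), Real.cos θ ^ k
      = ∫ θ in (0:ℝ)..(2*π), Real.cos θ ^ k :=
    intervalIntegral.integral_add_adjacent_intervals (hint 0 π) (hint π (2*π))
  have h2 : ∫ θ in π..(2*π), Real.cos θ ^ k = ∫ θ in (0:ℝ)..π, Real.cos (θ + π) ^ k := by
    rw [intervalIntegral.integral_comp_add_right (fun θ => Real.cos θ ^ k) π]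
    norm_num [two_mul]
  have h3 : ∫ θ in (0:ℝ)..π, Real.cos (θ + π) ^ k = - ∫ θ in (0:ℝ)..π, Real.cos θ ^ k := by
    rw [← intervalIntegral.integral_neg]
    refine intervalIntegral.integral_congr fun θ _ => ?_
    rw [Real.cos_add_pi θ, Odd.neg_pow hk]
  linarith

lemma circLaw_re_moment (k : ℕ) (hk : Odd k) : ∫ z, z.re ^ k ∂circLaw = 0 := by
  rw [circLaw, integral_map (f := fun z : ℂ => z.re ^ k) aux_exp_meas.aemeasurable
    ((Complex.continuous_re.pow k).aestronglyMeasurable)]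
  simp_rw [Complex.exp_ofReal_mul_I_re]
  rw [integral_smul_measure]
  have : ∫ θ in Set.Ico (0:ℝ) (2*π), Real.cos θ ^ k = 0 := by
    rw [setIntegral_congr_set Ico_ae_eq_Ioc,
      ← intervalIntegral.integral_of_le (by positivity)]
    exact aux_cos_odd k hk
  rw [this]
  simp



/-- Even-moment (Gaussian-type) bound for `G(X) = Re Σ_{p∈P} (w(p)/√p) X_p`
with independent `X_p` uniform on the unit circle:
`E[G(X)^{2M}] ≤ (2M)!/(2^{2M} M!) ⋅ (2 Σ_{p∈P} w(p)²/p)^M`. -/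
theorem stmt_16 {Ω : Type*} [MeasurableSpace Ω] (μ : Measure Ω) [IsProbabilityMeasure μ]
    (X : ℕ → Ω → ℂ)
    (hindep : iIndepFun (fun p : {p : ℕ // p.Prime} => X p) μ)
    (hlaw : ∀ p : ℕ, p.Prime →
      Measure.map (X p) μ =
        Measure.map (fun θ : ℝ => Complex.exp (θ * Complex.I))
          (ENNReal.ofReal (2 * π)⁻¹ • volume.restrict (Set.Ico 0 (2 * π))))
    (P : Finset ℕ) (hP : ∀ p ∈ P, p.Prime)
    (w : ℕ → ℝ) (hw : ∀ p ∈ P, 0 ≤ w p ∧ w p ≤ 1) (M : ℕ) :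
    ∫ ω, ((∑ p ∈ P, (w p / Real.sqrt p : ℂ) * X p ω).re) ^ (2 * M) ∂μ ≤
      ((2 * M).factorial : ℝ) / (2 ^ (2 * M) * (M.factorial : ℝ)) *
        (2 * ∑ p ∈ P, w p ^ 2 / p) ^ M := by
  classical
  have hlaw' : ∀ p : {p : ℕ // p.Prime}, Measure.map (X p.1) μ = circLaw :=
    fun p => (hlaw p.1 p.2).trans rfl
  have hae : ∀ p : {p : ℕ // p.Prime}, AEMeasurable (X p.1) μ := by
    intro p
    by_contra h
    have h0 : Measure.map (X p.1) μ = 0 := Measure.map_of_not_aemeasurable h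
    have h1 : (0 : Measure ℂ) = circLaw := h0 ▸ hlaw' p
    have h2 := circLaw_univ
    rw [← h1] at h2
    simp at h2
  set X' : {p : ℕ // p.Prime} → Ω → ℂ := fun p => (hae p).mk (X p.1) with hX'def
  have hX'meas : ∀ p, Measurable (X' p) := fun p => (hae p).measurable_mk
  have hXX' : ∀ p : {p : ℕ // p.Prime}, X p.1 =ᵐ[μ] X' p := fun p => (hae p).ae_eq_mk
  have hindep' : iIndepFun X' μ := aux_iIndepFun_ae_eq hindep hXX'
  have habs : ∀ p : {p : ℕ // p.Prime}, ∀ᵐ ω ∂μ, ‖X' p ω‖ = 1 := by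
    intro p
    have hs : MeasurableSet {z : ℂ | ¬ ‖z‖ = 1} :=
      (continuous_norm.measurable (measurableSet_singleton 1)).compl
    have h0 : μ (X p.1 ⁻¹' {z | ¬ ‖z‖ = 1}) = 0 := by
      rw [← Measure.map_apply_of_aemeasurable (hae p) hs, hlaw' p]
      exact circLaw_abs_ne
    have h1 : ∀ᵐ ω ∂μ, ‖X p.1 ω‖ = 1 := by
      rw [ae_iff]
      exact h0
    filter_upwards [h1, hXX' p] with ω h hh
    rw [← hh]; exact h
  have hmom : ∀ p : {p : ℕ // p.Prime}, ∀ k : ℕ, Odd k →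
      ∫ ω, (X' p ω).re ^ k ∂μ = 0 := by
    intro p k hk
    have he : (fun ω => (X' p ω).re ^ k) =ᵐ[μ] (fun ω => (X p.1 ω).re ^ k) :=
      (hXX' p).mono fun ω h => by show (X' p ω).re ^ k = (X p.1 ω).re ^ k; rw [← h]
    rw [integral_congr_ae he,
      show (∫ ω, (X p.1 ω).re ^ k ∂μ) = ∫ z, z.re ^ k ∂(Measure.map (X p.1) μ) from
        (integral_map (hae p) ((Complex.continuous_re.pow k).aestronglyMeasurable)).symm,
      hlaw' p]
    exact circLaw_re_moment k hk
  set a : {p : ℕ // p.Prime} → ℝ := fun p => w p.1 / Real.sqrt p.1 with hadef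
  set Y : {p : ℕ // p.Prime} → Ω → ℝ := fun p ω => a p * (X' p ω).re with hYdef
  set b : {p : ℕ // p.Prime} → ℝ := fun p => (a p) ^ 2 with hbdef
  have hYindep : iIndepFun Y μ :=
    hindep'.comp (fun p z => a p * z.re) fun p => Complex.measurable_re.const_mul _
  have hYmeas : ∀ p, Measurable (Y p) := fun p =>
    (Complex.measurable_re.comp (hX'meas p)).const_mul _
  have hbnn : ∀ p, 0 ≤ b p := fun p => sq_nonneg _
  have hYbound : ∀ p, ∀ᵐ ω ∂μ, |Y p ω| ≤ Real.sqrt (b p) := by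
    intro p
    filter_upwards [habs p] with ω h
    rw [hbdef]
    simp only [Real.sqrt_sq_eq_abs]
    calc |a p * (X' p ω).re| = |a p| * |(X' p ω).re| := abs_mul _ _
    _ ≤ |a p| * 1 := by
        refine mul_le_mul_of_nonneg_left ?_ (abs_nonneg _)
        rw [← h]; exact Complex.abs_re_le_norm _
    _ = |a p| := mul_one _
  have hYodd : ∀ p, ∀ k : ℕ, Odd k → ∫ ω, Y p ω ^ k ∂μ = 0 := by
    intro p k hk
    simp only [hYdef, mul_pow]
    rw [integral_const_mul, hmom p k hk, mul_zero]
  let emb : {x // x ∈ P} ↪ {p : ℕ // p.Prime} :=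
    ⟨fun x => ⟨x.1, hP x.1 x.2⟩, by intro x y h; apply Subtype.ext; exact congrArg (fun z : {p : ℕ // p.Prime} => z.1) h⟩
  set PP : Finset {p : ℕ // p.Prime} := P.attach.map emb with hPP
  have hsum_eq : ∀ᵐ ω ∂μ, ((∑ p ∈ P, (w p / Real.sqrt p : ℂ) * X p ω).re) ^ (2 * M)
      = (∑ q ∈ PP, Y q ω) ^ (2 * M) := by
    have hall : ∀ᵐ ω ∂μ, ∀ q ∈ PP, X q.1 ω = X' q ω :=
      (ae_ball_iff PP.countable_toSet).2 fun q _ => hXX' q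
    filter_upwards [hall] with ω h
    congr 1
    rw [Complex.re_sum, hPP, Finset.sum_map,
      ← Finset.sum_attach P fun p => ((w p / Real.sqrt p : ℂ) * X p ω).re]
    refine Finset.sum_congr rfl fun x _ => ?_
    have hx := h (emb x) (Finset.mem_map_of_mem emb (Finset.mem_attach P x))
    show ((w x.1 : ℂ) / (Real.sqrt x.1 : ℂ) * X x.1 ω).re = a (emb x) * (X' (emb x) ω).re
    rw [← hx, show ((w x.1 : ℂ) / (Real.sqrt x.1 : ℂ)) = ((w x.1 / Real.sqrt x.1 : ℝ) : ℂ) by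
      push_cast; ring, Complex.re_ofReal_mul]
    rfl
  have hsumb : ∑ q ∈ PP, b q = ∑ p ∈ P, w p ^ 2 / p := by
    rw [hPP, Finset.sum_map, ← Finset.sum_attach P fun p => w p ^ 2 / (p : ℝ)]
    refine Finset.sum_congr rfl fun x _ => ?_
    show (w x.1 / Real.sqrt x.1) ^ 2 = w x.1 ^ 2 / (x.1 : ℝ)
    rw [div_pow, Real.sq_sqrt (Nat.cast_nonneg _)]
  have main := aux_main μ Y hYindep hYmeas b hbnn hYbound hYodd PP M
  rw [integral_congr_ae hsum_eq]
  refine main.trans (le_of_eq ?_)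
  rw [hsumb]
  have h2 : (2:ℝ) ^ (2*M) = 2 ^ M * 2 ^ M := by rw [two_mul, pow_add]
  rw [h2, mul_pow]
  have hf : ((M.factorial : ℝ)) ≠ 0 := by positivity
  field_simp
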